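/- arXiv:1812.10978 — 2 statements merged into one kernel-verified Lean document; each statement's English description precedes it below -/
import Mathlib

section
/- For each even integer m, define G_m(s) = s^m/(25^m + s^m) for s ∈ ℝ. Then there is a constant C > 0, independent of m, such that |G_m'(s)| ≤ C for all even m ≥ 4 and all real s with 5 ≤ |s| ≤ 25(1 - m^{-1/2}). -/
lemma key_pow_bound (m : ℕ) (hm4 : 4 ≤ m) :
    (1 - ((m : ℝ) ^ ((1 : ℝ) / 2))⁻¹) ^ (m - 1) ≤ 4096 / m := by
  have hm0 : (0:ℝ) < m := by positivity
  set x : ℝ := ((m : ℝ) ^ ((1 : ℝ) / 2))⁻¹ with hxdef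
  have hsq : (m : ℝ) ^ ((1 : ℝ) / 2) = Real.sqrt m := (Real.sqrt_eq_rpow _).symm
  have ht2 : Real.sqrt m ^ 2 = (m : ℝ) := Real.sq_sqrt (le_of_lt hm0)
  have ht : (2:ℝ) ≤ Real.sqrt m := by
    rw [show (2:ℝ) = Real.sqrt 4 by
      rw [show (4:ℝ) = 2^2 by norm_num, Real.sqrt_sq (by norm_num)]]
    exact Real.sqrt_le_sqrt (by exact_mod_cast hm4)
  have hx_pos : 0 < x := by rw [hxdef, hsq]; positivity
  have hx_half : x ≤ 1/2 := by
    rw [hxdef, hsq]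
    rw [inv_le_iff_one_le_mul₀ (by linarith)]
    linarith
  have hx4 : x ^ 4 = ((m:ℝ)^2)⁻¹ := by
    have h4pow : (Real.sqrt m) ^ 4 = (m:ℝ) ^ 2 := by
      rw [show (4:ℕ) = 2*2 from rfl, pow_mul, ht2]
    rw [hxdef, hsq, inv_pow, h4pow]
  rcases eq_or_lt_of_le hm4 with h4 | h5
  · -- m = 4
    have : (1 - x) ^ (m-1) ≤ 1 := pow_le_one₀ (by linarith) (by linarith)
    calc (1 - x) ^ (m-1) ≤ 1 := this
      _ ≤ 4096 / m := by
        rw [le_div_iff₀ hm0]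
        have hmeq : (m:ℝ) = 4 := by exact_mod_cast h4.symm
        linarith
  · -- m ≥ 5
    have hm5 : 5 ≤ m := h5
    set k : ℕ := (m - 1) / 4 with hkdef
    have hk1 : 1 ≤ k := by omega
    have hk2 : 4 * k ≤ m - 1 := by omega
    have hk3 : m ≤ 8 * k := by omega
    have h1x : (0:ℝ) < 1 + x := by linarith
    have hstep : (1 - x) ≤ (1 + x)⁻¹ := by
      rw [inv_eq_one_div, le_div_iff₀ h1x]; nlinarith [sq_nonneg x]
    have h2 : (1 - x) ^ (m-1) ≤ ((1 + x) ^ (m-1))⁻¹ := by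
      rw [← inv_pow]
      exact pow_le_pow_left₀ (by linarith) hstep _
    have hbern : 1 + (k:ℝ) * x ≤ (1 + x) ^ k := by
      have := one_add_mul_le_pow (show (-2:ℝ) ≤ x by linarith) k
      simpa [mul_comm] using this
    have h3 : (1 + (k:ℝ) * x) ^ 4 ≤ (1 + x) ^ (m-1) := by
      calc (1 + (k:ℝ) * x) ^ 4 ≤ ((1 + x) ^ k) ^ 4 := by
            apply pow_le_pow_left₀ (by positivity) hbern
        _ = (1 + x) ^ (4 * k) := by rw [← pow_mul, mul_comm]
        _ ≤ (1 + x) ^ (m-1) := pow_le_pow_right₀ (by linarith) hk2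
    have h4 : ((k:ℝ) * x) ^ 4 ≤ (1 + (k:ℝ) * x) ^ 4 := by
      apply pow_le_pow_left₀ (by positivity) (by linarith [mul_nonneg (Nat.cast_nonneg k : (0:ℝ) ≤ k) hx_pos.le])
    have h5' : ((k:ℝ) * x) ^ 4 = (k:ℝ)^4 / (m:ℝ)^2 := by
      rw [mul_pow, hx4, div_eq_mul_inv]
    have h6 : (m:ℝ) / 4096 ≤ (k:ℝ)^4 / (m:ℝ)^2 := by
      rw [div_le_div_iff₀ (by norm_num) (by positivity)]
      have hk : (m:ℝ) ≤ 8 * k := by exact_mod_cast hk3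
      have hm1 : (1:ℝ) ≤ m := by exact_mod_cast (show 1 ≤ m by omega)
      nlinarith [sq_nonneg ((m:ℝ) - 8*k), sq_nonneg ((m:ℝ)^2 - 64*(k:ℝ)^2), pow_pos hm0 2, pow_pos hm0 3]
    have h7 : (m:ℝ) / 4096 ≤ (1 + x) ^ (m-1) := le_trans h6 (le_trans (h5' ▸ h4) h3)
    have h8 : ((1 + x) ^ (m-1))⁻¹ ≤ 4096 / (m:ℝ) := by
      rw [show (4096:ℝ)/m = ((m:ℝ)/4096)⁻¹ by rw [inv_div]]
      exact inv_anti₀ (by positivity) h7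
    exact le_trans h2 h8

/-- Uniform bound on the derivative of `G_m(s) = s^m / (25^m + s^m)` on the region
`5 ≤ |s| ≤ 25 (1 - m^{-1/2})`, with a constant independent of the even integer `m ≥ 4`. -/
theorem stmt_3 :
    ∃ C : ℝ, 0 < C ∧ ∀ m : ℕ, Even m → 4 ≤ m →
      ∀ s : ℝ, 5 ≤ |s| → |s| ≤ 25 * (1 - ((m : ℝ) ^ ((1 : ℝ) / 2))⁻¹) →
        |deriv (fun x : ℝ => x ^ m / (25 ^ m + x ^ m)) s| ≤ C := by
  refine ⟨4096, by norm_num, ?_⟩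
  intro m hme hm4 s hs1 hs2
  have hm0 : (0:ℝ) < m := by positivity
  have hm0' : (m:ℝ) ≠ 0 := ne_of_gt hm0
  set x : ℝ := ((m : ℝ) ^ ((1 : ℝ) / 2))⁻¹ with hxdef
  have hsm : (0:ℝ) ≤ s ^ m := hme.pow_nonneg s
  have h25 : (0:ℝ) < 25 ^ m := by positivity
  have hD : (0:ℝ) < 25 ^ m + s ^ m := by linarith
  -- derivative
  have hd : HasDerivAt (fun x : ℝ => x ^ m / (25 ^ m + x ^ m))
      ((↑m * s ^ (m - 1) * (25 ^ m + s ^ m) - s ^ m * (↑m * s ^ (m - 1))) / (25 ^ m + s ^ m) ^ 2) s :=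
    (hasDerivAt_pow m s).div ((hasDerivAt_pow m s).const_add (25 ^ m)) (ne_of_gt hD)
  rw [hd.deriv]
  have heq : (↑m * s ^ (m - 1) * (25 ^ m + s ^ m) - s ^ m * (↑m * s ^ (m - 1))) / (25 ^ m + s ^ m) ^ 2
      = (↑m * 25 ^ m * s ^ (m - 1)) / (25 ^ m + s ^ m) ^ 2 := by ring
  rw [heq, abs_div, abs_mul, abs_mul, abs_pow, abs_pow, abs_pow,
    abs_of_nonneg (Nat.cast_nonneg m : (0:ℝ) ≤ m), abs_of_pos hD,
    abs_of_nonneg (by norm_num : (0:ℝ) ≤ 25)]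
  have key := key_pow_bound m hm4
  have hsb : |s| ^ (m - 1) ≤ 25 ^ (m - 1) * (4096 / m) := by
    calc |s| ^ (m - 1) ≤ (25 * (1 - x)) ^ (m - 1) :=
          pow_le_pow_left₀ (abs_nonneg s) hs2 _
      _ = 25 ^ (m - 1) * (1 - x) ^ (m - 1) := mul_pow _ _ _
      _ ≤ 25 ^ (m - 1) * (4096 / m) := by
          apply mul_le_mul_of_nonneg_left key (by positivity)
  have h25' : (25:ℝ) ^ m = 25 * 25 ^ (m - 1) := by
    conv_lhs => rw [show m = (m - 1) + 1 by omega]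
    rw [pow_succ]; ring
  calc (↑m * 25 ^ m * |s| ^ (m - 1)) / (25 ^ m + s ^ m) ^ 2
      ≤ (↑m * 25 ^ m * (25 ^ (m - 1) * (4096 / m))) / (25 ^ m) ^ 2 := by
        gcongr <;> first | linarith | positivity
    _ = 4096 / 25 := by
        rw [h25']; field_simp
    _ ≤ 4096 := by norm_num
end

section
/- For each even integer m, define H_m(s) = s^{m·2^m}/(1+s^m)^{2^m} for s ∈ ℝ. Then for every real s with |s| > 2, H_m(s) → 1 as m → ∞ (m even), and moreover H_m is even and non-decreasing on [0,∞). -/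
open Filter

/-- `H_m(s) = (s^m/(1+s^m))^{2^m}` for even `m`. -/
noncomputable def Hfun (m : ℕ) (s : ℝ) : ℝ := (s ^ m / (1 + s ^ m)) ^ (2 ^ m)

/-- For every real `s` with `|s| > 2`, `H_m(s) → 1` as `m → ∞` through even integers;
moreover each `H_m` (with `m` even) is an even function which is non-decreasing on `[0, ∞)`. -/
theorem stmt_5 :
    (∀ s : ℝ, 2 < |s| →
      Tendsto (fun k : ℕ => Hfun (2 * k) s) atTop (nhds 1)) ∧
    (∀ m : ℕ, Even m →
      (∀ s : ℝ, Hfun m (-s) = Hfun m s) ∧ MonotoneOn (Hfun m) (Set.Ici 0)) := by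
  constructor
  · intro s hs
    have ht4 : (4:ℝ) < s ^ 2 := by nlinarith [abs_nonneg s, sq_abs s]
    set t : ℝ := s ^ 2 with htdef
    have ht1 : (1:ℝ) ≤ t := by nlinarith
    have hrewrite : ∀ k : ℕ, Hfun (2 * k) s = (t ^ k / (1 + t ^ k)) ^ (4 ^ k) := by
      intro k
      have h1 : s ^ (2 * k) = t ^ k := by rw [pow_mul]
      have h2 : (2 : ℕ) ^ (2 * k) = 4 ^ k := by rw [pow_mul]; norm_num
      simp [Hfun, h1, h2]
    have hx1 : ∀ k : ℕ, (1:ℝ) ≤ t ^ k := fun k => one_le_pow₀ ht1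
    have hxpos : ∀ k : ℕ, (0:ℝ) < 1 + t ^ k := fun k => by nlinarith [hx1 k]
    have hub : ∀ k : ℕ, Hfun (2 * k) s ≤ 1 := by
      intro k
      rw [hrewrite k]
      apply pow_le_one₀
      · positivity
      · rw [div_le_one (hxpos k)]; linarith [hx1 k]
    have hlb : ∀ k : ℕ, 1 - (4 / t) ^ k ≤ Hfun (2 * k) s := by
      intro k
      rw [hrewrite k]
      set x : ℝ := t ^ k with hxdef
      have hx1' := hx1 k
      have hxp := hxpos k
      have hfrac : x / (1 + x) = 1 + (-(1 / (1 + x))) := by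
        have h1x : (1 + x) ≠ 0 := ne_of_gt hxp
        field_simp
        ring
      have hbern : 1 + (4 ^ k : ℕ) * (-(1 / (1 + x))) ≤ (1 + (-(1 / (1 + x)))) ^ (4 ^ k) := by
        apply one_add_mul_le_pow
        have : 1 / (1 + x) ≤ 1 := by rw [div_le_one hxp]; linarith
        nlinarith [this, (by positivity : (0:ℝ) ≤ 1 / (1 + x))]
      rw [hfrac]
      refine le_trans ?_ hbern
      have hcast : ((4 ^ k : ℕ) : ℝ) = 4 ^ k := by push_cast; ring
      rw [hcast]
      have h4x : (4:ℝ) ^ k ≤ x := by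
        rw [hxdef]; exact pow_le_pow_left₀ (by norm_num) (le_of_lt ht4) k
      have hxx : (0:ℝ) < x := by linarith
      have key : (4:ℝ) ^ k * (1 / (1 + x)) ≤ (4 / t) ^ k := by
        rw [div_pow]
        rw [mul_one_div, div_le_div_iff₀ hxp (by positivity : (0:ℝ) < t ^ k)]
        have : (4:ℝ) ^ k * (t ^ k) ≤ 4 ^ k * (1 + x) := by
          have : t ^ k ≤ 1 + x := by rw [hxdef]; linarith
          nlinarith [pow_pos (show (0:ℝ) < 4 by norm_num) k]
        linarith
      linarith
    have hlim : Tendsto (fun k : ℕ => 1 - (4 / t) ^ k) atTop (nhds 1) := by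
      have h0 : Tendsto (fun k : ℕ => (4 / t) ^ k) atTop (nhds 0) := by
        apply tendsto_pow_atTop_nhds_zero_of_lt_one
        · positivity
        · rw [div_lt_one (by linarith)]; linarith
      have := h0.const_sub 1
      simpa using this
    exact tendsto_of_tendsto_of_tendsto_of_le_of_le hlim tendsto_const_nhds hlb hub
  · intro m hm
    constructor
    · intro s
      simp [Hfun, hm.neg_pow]
    · intro a ha b hb hab
      simp only [Set.mem_Ici] at ha hb
      have hab' : a ^ m ≤ b ^ m := pow_le_pow_left₀ ha hab m
      have ha' : (0:ℝ) ≤ a ^ m := pow_nonneg ha m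
      have hb' : (0:ℝ) ≤ b ^ m := pow_nonneg hb m
      have h1a : (0:ℝ) < 1 + a ^ m := by linarith
      have h1b : (0:ℝ) < 1 + b ^ m := by linarith
      have hdiv : a ^ m / (1 + a ^ m) ≤ b ^ m / (1 + b ^ m) := by
        rw [div_le_div_iff₀ h1a h1b]; nlinarith
      exact pow_le_pow_left₀ (by positivity) hdiv _
end
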